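/- For any real number λ, let e₁ = (𝐢, 0, 0), e₂ = ((1/2)(𝐣+𝐤), 0, 0), e₃ = (0, -((λ+7)/6)𝐣 + ((11-λ)/6)𝐤, -((λ+9)/6)𝐣 + ((9-λ)/6)𝐤) in 𝔰𝔩(2,ℝ)⊕𝔰𝔩(2,ℝ)⊕𝔰𝔩(2,ℝ). Then [e₁,e₂] = 2e₂, [e₁,e₃] = 0, and [e₂,e₃] = 0, so {e₁,e₂,e₃} spans a Lie subalgebra of Bianchi type III. -/
import Mathlib


open Matrix

abbrev M2 := Matrix (Fin 2) (Fin 2) ℝ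

noncomputable def mi : M2 := !![1, 0; 0, -1]
noncomputable def mj : M2 := !![0, 1; 1, 0]
noncomputable def mk : M2 := !![0, 1; -1, 0]

/-- e₁ = (𝐢, 0, 0). -/
noncomputable def e₁ : M2 × M2 × M2 := (mi, 0, 0)
/-- e₂ = ((1/2)(𝐣+𝐤), 0, 0). -/
noncomputable def e₂ : M2 × M2 × M2 := ((1/2 : ℝ) • (mj + mk), 0, 0)
/-- e₃(λ) = (0, -((λ+7)/6)𝐣 + ((11-λ)/6)𝐤, -((λ+9)/6)𝐣 + ((9-λ)/6)𝐤). -/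
noncomputable def e₃ (l : ℝ) : M2 × M2 × M2 :=
  (0, (-(l + 7) / 6) • mj + ((11 - l) / 6) • mk,
      (-(l + 9) / 6) • mj + ((9 - l) / 6) • mk)

theorem stmt_15 (l : ℝ) :
    -- componentwise commutator brackets:
    e₁ * e₂ - e₂ * e₁ = (2 : ℝ) • e₂ ∧
    e₁ * e₃ l - e₃ l * e₁ = 0 ∧
    e₂ * e₃ l - e₃ l * e₂ = 0 ∧
    -- {e₁,e₂,e₃} spans a (Bianchi type III) Lie subalgebra:
    LinearIndependent ℝ ![e₁, e₂, e₃ l] := by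
  refine ⟨?_, ?_, ?_, ?_⟩
  · refine Prod.ext ?_ (Prod.ext ?_ ?_) <;>
      simp only [e₁, e₂, mi, mj, mk, Prod.fst_mul, Prod.snd_mul, Prod.fst_sub, Prod.snd_sub,
        Prod.smul_fst, Prod.smul_snd] <;>
      · ext i j; fin_cases i <;> fin_cases j <;>
          simp [Matrix.mul_apply, Fin.sum_univ_two] <;> ring
  · refine Prod.ext ?_ (Prod.ext ?_ ?_) <;>
      simp only [e₁, e₃, mi, mj, mk, Prod.fst_mul, Prod.snd_mul, Prod.fst_sub, Prod.snd_sub,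
        Prod.fst_zero, Prod.snd_zero] <;>
      · ext i j; fin_cases i <;> fin_cases j <;>
          simp [Matrix.mul_apply, Fin.sum_univ_two] <;> ring
  · refine Prod.ext ?_ (Prod.ext ?_ ?_) <;>
      simp only [e₂, e₃, mi, mj, mk, Prod.fst_mul, Prod.snd_mul, Prod.fst_sub, Prod.snd_sub,
        Prod.fst_zero, Prod.snd_zero] <;>
      · ext i j; fin_cases i <;> fin_cases j <;>
          simp [Matrix.mul_apply, Fin.sum_univ_two] <;> ring
  · rw [Fintype.linearIndependent_iff]
    intro g hg i
    have h := hg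
    simp only [Fin.sum_univ_three, Matrix.cons_val_zero, Matrix.cons_val_one, Matrix.head_cons,
      Matrix.cons_val_two, Matrix.tail_cons, e₁, e₂, e₃, mi, mj, mk, Prod.ext_iff,
      Prod.smul_mk, Prod.mk_add_mk, Prod.fst_zero, Prod.snd_zero] at h
    obtain ⟨h1, h2, h3⟩ := h
    have h1a := congrFun (congrFun h1 0) 0
    have h1b := congrFun (congrFun h1 0) 1
    have h2a := congrFun (congrFun h2 1) 0
    simp at h1a h1b h2a
    have hg0 : g 0 = 0 := by linarith
    have hg1 : g 1 = 0 := by linarith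
    have hg2 : g 2 = 0 := by rcases h2a with h | h; exact h; linarith
    fin_cases i <;> assumption
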